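/- For every n ≥ 2 and all k, ℓ ∈ ℕ, the identity (k, 0, …, 0, ℓ) = Σ_{(a_1,…,a_n) ∈ 𝓔_n(k+ℓ)} (−1)^{a_1+⋯+a_{n−1}+(n−1)(r−1)} · (∏_{i=1}^{n−1} A(k − x_i, r − a_i)) · (a_1, …, a_n) holds in V_n, where x_i = a_1 + a_2 + ⋯ + a_{i−1} (so x_1 = 0), and (k,0,…,0,ℓ) denotes the basis tuple with first entry k, last entry ℓ, and all other entries 0. -/

import Mathlib

noncomputable section

open Finset

/-- The field `ℚ(q)` of rational functions. -/
abbrev K : Type := RatFunc ℚ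

/-- The variable `q`. -/
def q : K := RatFunc.X

/-- The balanced `q`-integer `[n] = (q^n - q^{-n})/(q - q^{-1})`. -/
def qint (n : ℤ) : K := (q ^ n - q ^ (-n)) / (q - q⁻¹)

/-- The `q`-factorial `[m]! = [1][2]⋯[m]`. -/
def qfact (m : ℕ) : K := ∏ t ∈ Finset.range m, qint (t + 1)

/-- The `q`-binomial coefficient `[n ¦ m] = [n][n-1]⋯[n-m+1]/[m]!`. -/
def qbinom (n : ℤ) (m : ℕ) : K := (∏ t ∈ Finset.range m, qint (n - t)) / qfact m

/-- The tuple `a(i,j)` obtained from `a` by replacing the pair of entries at the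
(0-based) positions `i, i+1` by `(a_i − j, a_{i+1} + j)`. -/
def tupleRepl {n : ℕ} (a : Fin n → ℕ) (i : ℕ) (h : i + 1 < n) (j : ℕ) : Fin n → ℕ :=
  fun t =>
    if t = (⟨i, by omega⟩ : Fin n) then a ⟨i, by omega⟩ - j
    else if t = (⟨i + 1, h⟩ : Fin n) then a ⟨i + 1, h⟩ + j
    else a t

/-- The set of spanning elements of the subspace `R_n` of relations:
`Σ_{j=0}^{r} (−1)^j [r ¦ j] · a(i,j)` for `a ∈ ℕ^n` and a position `i` with `a_i ≥ r`. -/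
def relSet (r n : ℕ) : Set ((Fin n → ℕ) →₀ K) :=
  { x | ∃ (a : Fin n → ℕ) (i : ℕ) (h : i + 1 < n), r ≤ a ⟨i, by omega⟩ ∧
      x = ∑ j ∈ Finset.range (r + 1),
            ((-1 : K) ^ j * qbinom (r : ℤ) j) • Finsupp.single (tupleRepl a i h j) (1 : K) }

/-- The coefficient `A(k,s) = [s+k−r−1 ¦ s−1] · [k ¦ r−s]`. -/
def Acoef (r : ℕ) (k : ℤ) (s : ℕ) : K := qbinom ((s : ℤ) + k - (r : ℤ) - 1) (s - 1) * qbinom k (r - s)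

/-- Entry access for a tuple, with out-of-range positions reading `0`. -/
def aget {n : ℕ} (a : Fin n → ℕ) (t : ℕ) : ℕ := if h : t < n then a ⟨t, h⟩ else 0

/-- The basis tuple `(k, 0, …, 0, ℓ)` with first entry `k`, last entry `ℓ`,
and all other entries `0`. -/
def endTuple (n k l : ℕ) : Fin n → ℕ :=
  fun t => if t.val = 0 then k else if t.val = n - 1 then l else 0

/-- The finite set `𝓔_n(m)` of tuples with entry sum `m` and all entries except
possibly the last one lying in `[0, r−1]`. -/
def ESet (r n m : ℕ) : Finset (Fin n → ℕ) :=
  (Fintype.piFinset fun _ : Fin n => Finset.range (m + 1)).filter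
    (fun a => (∑ t, a t) = m ∧ ∀ t : Fin n, t.val < n - 1 → a t ≤ r - 1)

/-! Reducing a pair of adjacent entries: by strong induction on `M`, the relations give
`(…, M, L, …) = Σ_{b < r} (-1)^(b + r - 1) A(M, r - b) (…, b, M + L - b, …)` in `V`, because
`Σ_j (-1)^j [r ¦ j] A(k - j, s) = 0`. Reducing the first pair of `(k, 0, …, 0, ℓ)` this way and
then the remaining tuple `(k - b, 0, …, 0, ℓ)` by induction on `n` (prefixing an entry maps
relations to relations) gives the formula; the terms with `b > k` vanish since then
`A(k, r - b) = 0`. -/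

lemma q_ne_zero : q ≠ 0 := RatFunc.X_ne_zero

lemma q_zpow_injective : Function.Injective fun m : ℤ => q ^ m := by
  classical
  intro a b h
  simpa [q] using congrArg (RatFunc.inftyValuation ℚ) h

lemma q_sub_q_inv_ne_zero : q - q⁻¹ ≠ 0 := by
  intro h
  have : (1 : ℤ) = -1 := q_zpow_injective (by simpa [sub_eq_zero] using h)
  omega

lemma qint_ne_zero {n : ℤ} (hn : n ≠ 0) : qint n ≠ 0 := by
  refine div_ne_zero (sub_ne_zero.2 fun h => hn ?_) q_sub_q_inv_ne_zero
  have := q_zpow_injective h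
  omega

lemma qint_zero : qint 0 = 0 := by simp [qint]

lemma qint_neg (n : ℤ) : qint (-n) = -qint n := by
  rw [qint, qint, neg_neg, ← neg_div, neg_sub]

lemma qint_eq_add (n m : ℤ) : qint n = q ^ (m - n) * qint m + q ^ m * qint (n - m) := by
  simp only [qint, zpow_sub₀ q_ne_zero, zpow_neg]
  field_simp [q_ne_zero, q_sub_q_inv_ne_zero]
  ring

lemma qfact_ne_zero (m : ℕ) : qfact m ≠ 0 :=
  prod_ne_zero_iff.2 fun _ _ => qint_ne_zero (by omega)

lemma qfact_succ (m : ℕ) : qfact (m + 1) = qfact m * qint (m + 1) := by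
  rw [qfact, prod_range_succ, ← qfact]

@[simp] lemma qbinom_zero_right (n : ℤ) : qbinom n 0 = 1 := by simp [qbinom, qfact]

lemma qbinom_natCast_self (m : ℕ) : qbinom m m = 1 := by
  rw [qbinom, div_eq_one_iff_eq (qfact_ne_zero m), qfact, ← prod_range_reflect]
  refine prod_congr rfl fun t ht => congrArg qint ?_
  have := mem_range.1 ht
  omega

lemma qbinom_natCast_of_lt {N m : ℕ} (h : N < m) : qbinom N m = 0 := by
  rw [qbinom, prod_eq_zero (mem_range.2 h) (by simp [qint_zero]), zero_div]

lemma qbinom_neg_one (m : ℕ) : qbinom (-1) m = (-1) ^ m := by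
  have h : ∏ t ∈ range m, qint (-1 - t) = ∏ t ∈ range m, (-1) * qint (t + 1) :=
    prod_congr rfl fun t _ => by rw [neg_one_mul, ← qint_neg]; ring_nf
  rw [qbinom, h, prod_mul_distrib, prod_const, card_range, ← qfact,
    mul_div_cancel_right₀ _ (qfact_ne_zero m)]

lemma qbinom_succ (n : ℤ) (m : ℕ) :
    qbinom n (m + 1) =
      q ^ ((m : ℤ) + 1 - n) * qbinom (n - 1) m + q ^ ((m : ℤ) + 1) * qbinom (n - 1) (m + 1) := by
  have hnum : ∏ t ∈ range (m + 1), qint (n - t) = qint n * ∏ t ∈ range m, qint (n - 1 - t) := by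
    rw [prod_range_succ', mul_comm]
    push_cast
    congr 1
    · ring_nf
    · exact prod_congr rfl fun t _ => by ring_nf
  rw [qbinom, qbinom, qbinom, hnum, prod_range_succ, qfact_succ,
    qint_eq_add n ((m : ℤ) + 1)]
  field_simp [qfact_ne_zero m, qint_ne_zero (by omega : (m : ℤ) + 1 ≠ 0)]
  ring_nf

/-- Gauss's `q`-binomial theorem. -/
lemma sum_qbinom_mul_pow (r : ℕ) (z : K) :
    ∑ j ∈ range (r + 1), (-1) ^ j * qbinom r j * z ^ j =
      ∏ t ∈ range r, (1 - q ^ ((r : ℤ) - 1 - 2 * t) * z) := by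
  induction r generalizing z with
  | zero => simp
  | succ r ih =>
    have hterm : ∀ j ∈ range (r + 1),
        (-1 : K) ^ (j + 1) * qbinom (r + 1 : ℕ) (j + 1) * z ^ (j + 1) =
        -(q ^ (-(r : ℤ)) * z) * ((-1) ^ j * qbinom r j * (q * z) ^ j) +
          (-1) ^ (j + 1) * qbinom r (j + 1) * (q * z) ^ (j + 1) := by
      intro j _
      rw [Nat.cast_succ, qbinom_succ, add_sub_cancel_right,
        show (j : ℤ) + 1 - (r + 1) = -r + j by ring, zpow_add₀ q_ne_zero,
        show (j : ℤ) + 1 = (j + 1 : ℕ) by push_cast; ring, zpow_natCast, zpow_natCast]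
      ring
    have hshift : ∑ j ∈ range (r + 1), (-1 : K) ^ (j + 1) * qbinom r (j + 1) * (q * z) ^ (j + 1) =
        ∑ j ∈ range (r + 1), (-1) ^ j * qbinom r j * (q * z) ^ j - 1 := by
      conv_lhs => rw [sum_range_succ, qbinom_natCast_of_lt (Nat.lt_succ_self r)]
      conv_rhs => rw [sum_range_succ']
      simp
    rw [sum_range_succ', sum_congr rfl hterm, sum_add_distrib, ← mul_sum, hshift, ih,
      prod_range_succ]
    simp only [pow_zero, qbinom_zero_right, mul_one]
    have hfactor : ∀ t ∈ range r, 1 - q ^ ((r : ℤ) - 1 - 2 * t) * (q * z) =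
        1 - q ^ (((r + 1 : ℕ) : ℤ) - 1 - 2 * t) * z := by
      intro t _
      rw [← mul_assoc, ← zpow_add_one₀ q_ne_zero]
      push_cast
      ring_nf
    rw [prod_congr rfl hfactor]
    push_cast
    ring_nf

lemma sum_qbinom_mul_zpow_eq_zero {r s : ℕ} (hs : s < r) :
    ∑ j ∈ range (r + 1), (-1) ^ j * qbinom r j * (q ^ ((r : ℤ) - 1 - 2 * s)) ^ j = 0 := by
  rw [sum_qbinom_mul_pow]
  refine prod_eq_zero (i := r - 1 - s) (mem_range.2 (by omega)) ?_
  rw [← zpow_add₀ q_ne_zero, show (r : ℤ) - 1 - 2 * ((r - 1 - s : ℕ) : ℤ) + (r - 1 - 2 * s) = 0 by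
    omega, zpow_zero, sub_self]

/-- Expanding the product gives a combination of the sequences `(q ^ (r - 1 - 2 s)) ^ j` with
`s < r`, each killed by the alternating sum by the `q`-binomial theorem. -/
lemma sum_qbinom_mul_prod_qint_sub_eq_zero {ι : Type*} {r : ℕ} (s : Finset ι) (c : ι → ℤ)
    (hs : s.card + 1 = r) :
    ∑ j ∈ range (r + 1), (-1) ^ j * qbinom r j * ∏ i ∈ s, qint (c i - j) = 0 := by
  classical
  let v : K := (q - q⁻¹)⁻¹
  let α : Finset ι → K := fun T =>
    v ^ s.card * ((∏ i ∈ T, q ^ c i) * ∏ i ∈ s \ T, -q ^ (-c i))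
  have hexpand : ∀ j : ℕ, ∏ i ∈ s, qint (c i - j) =
      ∑ T ∈ s.powerset, α T * (q ^ ((r : ℤ) - 1 - 2 * T.card)) ^ j := by
    intro j
    have hfactor : ∀ i ∈ s, qint (c i - j) =
        v * (q ^ c i * q ^ (-(j : ℤ)) + -q ^ (-c i) * q ^ (j : ℤ)) := by
      intro i _
      rw [qint, div_eq_inv_mul, neg_mul, ← zpow_add₀ q_ne_zero, ← zpow_add₀ q_ne_zero]
      simp only [v]
      ring_nf
    rw [prod_congr rfl hfactor, prod_mul_distrib, prod_const, prod_add, mul_sum]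
    refine sum_congr rfl fun T hT => ?_
    have hTs := card_le_card (mem_powerset.1 hT)
    have hpow : (q ^ (-(j : ℤ))) ^ T.card * (q ^ (j : ℤ)) ^ (s.card - T.card) =
        (q ^ ((r : ℤ) - 1 - 2 * T.card)) ^ j := by
      simp only [← zpow_natCast, ← zpow_mul, ← zpow_add₀ q_ne_zero]
      congr 1
      push_cast [hTs, ← hs]
      ring
    rw [prod_mul_distrib, prod_mul_distrib, prod_const, prod_const,
      card_sdiff_of_subset (mem_powerset.1 hT), ← hpow]
    simp only [α]
    ring
  simp_rw [hexpand, mul_sum]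
  rw [sum_comm]
  refine sum_eq_zero fun T hT => ?_
  have hT : T.card < r := by have := card_le_card (mem_powerset.1 hT); omega
  rw [← mul_zero (α T), ← sum_qbinom_mul_zpow_eq_zero hT, mul_sum]
  exact sum_congr rfl fun _ _ => by ring

lemma qbinom_sub_natCast (n : ℤ) (m j : ℕ) :
    qbinom (n - j) m = (∏ t ∈ range m, qint (n - t - j)) / qfact m := by
  rw [qbinom]
  congr 1
  exact prod_congr rfl fun t _ => by ring_nf

lemma sum_qbinom_mul_Acoef_sub_eq_zero {r s : ℕ} (hs : 1 ≤ s) (hsr : s ≤ r) (k : ℤ) :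
    ∑ j ∈ range (r + 1), (-1) ^ j * qbinom r j * Acoef r (k - j) s = 0 := by
  let c : ℕ ⊕ ℕ → ℤ := Sum.elim (fun t => s + k - r - 1 - t) (fun t => k - t)
  have hA : ∀ j : ℕ, Acoef r (k - j) s =
      (∏ x ∈ (range (s - 1)).disjSum (range (r - s)), qint (c x - j)) /
        (qfact (s - 1) * qfact (r - s)) := by
    intro j
    rw [prod_disjSum, Acoef, show (s : ℤ) + (k - j) - r - 1 = s + k - r - 1 - j by ring,
      qbinom_sub_natCast, qbinom_sub_natCast, div_mul_div_comm]
    rfl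
  simp_rw [hA, ← mul_div_assoc, ← sum_div]
  rw [sum_qbinom_mul_prod_qint_sub_eq_zero _ _ (by simp; omega), zero_div]

lemma Acoef_eq_sum {r s : ℕ} (hs : 1 ≤ s) (hsr : s ≤ r) (k : ℤ) :
    Acoef r k s = ∑ j ∈ range r, (-1) ^ j * qbinom r (j + 1) * Acoef r (k - (j + 1)) s := by
  have h := sum_qbinom_mul_Acoef_sub_eq_zero hs hsr k
  rw [sum_range_succ'] at h
  have hneg : ∑ j ∈ range r, (-1) ^ (j + 1) * qbinom r (j + 1) * Acoef r (k - (j + 1 : ℕ)) s =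
      -∑ j ∈ range r, (-1) ^ j * qbinom r (j + 1) * Acoef r (k - (j + 1)) s := by
    rw [← sum_neg_distrib]
    exact sum_congr rfl fun j _ => by push_cast; ring
  simp only [pow_zero, qbinom_zero_right, Nat.cast_zero, sub_zero, one_mul] at h
  linear_combination h - hneg

/-- The coefficient of `(b, M + L - b)` when a pair `(M, L)` of adjacent entries is reduced. -/
def pairCoef (r : ℕ) (k : ℤ) (b : ℕ) : K := (-1) ^ (b + (r - 1)) * Acoef r k (r - b)

lemma pairCoef_eq_sum {r b : ℕ} (hb : b < r) (k : ℤ) :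
    pairCoef r k b = ∑ j ∈ range r, (-1) ^ j * qbinom r (j + 1) * pairCoef r (k - (j + 1)) b := by
  rw [pairCoef, Acoef_eq_sum (by omega) (by omega) k, mul_sum]
  exact sum_congr rfl fun _ _ => by rw [pairCoef]; ring

lemma pairCoef_self {r M : ℕ} (hM : M < r) : pairCoef r M M = 1 := by
  rw [pairCoef, Acoef, show ((r - M : ℕ) : ℤ) + M - r - 1 = -1 by omega,
    show r - (r - M) = M by omega, qbinom_neg_one, qbinom_natCast_self, mul_one, ← pow_add,
    show M + (r - 1) + (r - M - 1) = 2 * (r - 1) by omega, pow_mul]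
  norm_num

lemma pairCoef_eq_zero_of_lt {r b k : ℕ} (hb : b ≤ r) (hkb : k < b) : pairCoef r k b = 0 := by
  rw [pairCoef, Acoef, show r - (r - b) = b by omega, qbinom_natCast_of_lt hkb, mul_zero,
    mul_zero]

lemma pairCoef_eq_zero_of_gt {r b M : ℕ} (hbM : b < M) (hM : M < r) : pairCoef r M b = 0 := by
  rw [pairCoef, Acoef, show ((r - b : ℕ) : ℤ) + M - r - 1 = ((M - b - 1 : ℕ) : ℤ) by omega,
    qbinom_natCast_of_lt (by omega : M - b - 1 < r - b - 1), zero_mul, mul_zero]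

abbrev relSpan (r n : ℕ) : Submodule K ((Fin n → ℕ) →₀ K) := Submodule.span K (relSet r n)

local notation "𝐞[" a "]" => Finsupp.single a (1 : K)

lemma tupleRepl_cons_cons {m : ℕ} (M L j : ℕ) (t : Fin m → ℕ) :
    tupleRepl (Fin.cons M (Fin.cons L t) : Fin (m + 2) → ℕ) 0 (by omega) j =
      Fin.cons (M - j) (Fin.cons (L + j) t) := by
  funext i
  refine Fin.cases ?_ (fun i => Fin.cases ?_ (fun i => ?_) i) i <;> simp [tupleRepl, Fin.ext_iff]

lemma cons_tupleRepl {n : ℕ} (b : ℕ) (a : Fin n → ℕ) (i : ℕ) (h : i + 1 < n) (j : ℕ) :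
    (Fin.cons b (tupleRepl a i h j) : Fin (n + 1) → ℕ) =
      tupleRepl (Fin.cons b a) (i + 1) (by omega) j := by
  have hcons : ∀ k (hk : k + 1 < n + 1),
      (Fin.cons b a : Fin (n + 1) → ℕ) ⟨k + 1, hk⟩ = a ⟨k, by omega⟩ := fun _ _ => rfl
  funext s
  refine Fin.cases ?_ (fun s => ?_) s <;> simp [tupleRepl, Fin.ext_iff, hcons]

lemma SModEq.mapDomain_cons {r n : ℕ} {x y : (Fin n → ℕ) →₀ K} (h : x ≡ y [SMOD relSpan r n])
    (b : ℕ) :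
    x.mapDomain (Fin.cons b) ≡ y.mapDomain (Fin.cons b) [SMOD relSpan r (n + 1)] := by
  refine (h.map (Finsupp.lmapDomain K K (Fin.cons (α := fun _ => ℕ) b))).mono ?_
  rw [Submodule.map_span, Submodule.span_le]
  rintro _ ⟨_, ⟨a, i, hi, ha, rfl⟩, rfl⟩
  refine Submodule.subset_span ⟨Fin.cons b a, i + 1, by omega, ha, ?_⟩
  simp only [map_sum, map_smul, Finsupp.lmapDomain_apply, Finsupp.mapDomain_single,
    cons_tupleRepl]

lemma single_cons_cons_smodEq_sum_qbinom {r m M : ℕ} (hM : r ≤ M) (L : ℕ) (t : Fin m → ℕ) :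
    𝐞[Fin.cons M (Fin.cons L t)] ≡ ∑ j ∈ range r, ((-1) ^ j * qbinom r (j + 1)) •
      𝐞[Fin.cons (M - (j + 1)) (Fin.cons (L + (j + 1)) t)] [SMOD relSpan r (m + 2)] := by
  have hrel : ∑ j ∈ range (r + 1), ((-1) ^ j * qbinom r j) •
      𝐞[Fin.cons (M - j) (Fin.cons (L + j) t)] ∈ relSpan r (m + 2) :=
    Submodule.subset_span ⟨Fin.cons M (Fin.cons L t), 0, by omega, by simpa using hM,
      by simp_rw [tupleRepl_cons_cons]⟩
  rw [SModEq.sub_mem]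
  convert hrel using 1
  rw [sum_range_succ']
  simp [pow_succ, sub_eq_add_neg, ← sum_neg_distrib, add_comm]

lemma single_cons_cons_smodEq {r m : ℕ} (t : Fin m → ℕ) (M L : ℕ) :
    𝐞[Fin.cons M (Fin.cons L t)] ≡ ∑ b ∈ range r, pairCoef r M b •
      𝐞[Fin.cons b (Fin.cons (M + L - b) t)] [SMOD relSpan r (m + 2)] := by
  induction M using Nat.strong_induction_on generalizing L with
  | _ M ih =>
  rcases lt_or_ge M r with hM | hM
  · rw [sum_eq_single_of_mem M (mem_range.2 hM), pairCoef_self hM, one_smul,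
      Nat.add_sub_cancel_left]
    intro b hb hbM
    rcases lt_or_gt_of_ne hbM with hlt | hgt
    · rw [pairCoef_eq_zero_of_gt hlt hM, zero_smul]
    · rw [pairCoef_eq_zero_of_lt (mem_range.1 hb).le hgt, zero_smul]
  calc _ ≡ ∑ j ∈ range r, ((-1) ^ j * qbinom r (j + 1)) •
        𝐞[(Fin.cons (M - (j + 1)) (Fin.cons (L + (j + 1)) t) : Fin (m + 2) → ℕ)]
        [SMOD relSpan r (m + 2)] := single_cons_cons_smodEq_sum_qbinom hM L t
    _ ≡ ∑ j ∈ range r, ((-1) ^ j * qbinom r (j + 1)) • ∑ b ∈ range r,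
        pairCoef r (M - (j + 1) : ℕ) b •
          𝐞[(Fin.cons b (Fin.cons (M - (j + 1) + (L + (j + 1)) - b) t) : Fin (m + 2) → ℕ)]
        [SMOD relSpan r (m + 2)] :=
        SModEq.sum fun j hj =>
          (ih (M - (j + 1)) (by have := mem_range.1 hj; omega) (L + (j + 1))).smul _
    _ = _ := by
      simp_rw [smul_sum, smul_smul]
      rw [sum_comm]
      refine sum_congr rfl fun b hb => ?_
      rw [pairCoef_eq_sum (mem_range.1 hb), sum_smul]
      refine sum_congr rfl fun j hj => ?_
      have hjM : j + 1 ≤ M := by have := mem_range.1 hj; omega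
      rw [Nat.cast_sub hjM, show M - (j + 1) + (L + (j + 1)) - b = M + L - b by omega]
      push_cast
      rfl

lemma mem_ESet {r n m : ℕ} {a : Fin n → ℕ} :
    a ∈ ESet r n m ↔ ∑ t, a t = m ∧ ∀ t : Fin n, t.val < n - 1 → a t ≤ r - 1 := by
  rw [ESet, mem_filter, and_iff_right_iff_imp]
  rintro ⟨hsum, -⟩
  refine Fintype.mem_piFinset.2 fun t => mem_range.2 ?_
  have := single_le_sum (fun _ _ => Nat.zero_le _) (mem_univ t) (f := a)
  omega

lemma ESet_one (r m : ℕ) : ESet r 1 m = {fun _ => m} := by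
  ext a
  simp [mem_ESet, funext_iff, Fin.forall_fin_one]

lemma cons_mem_ESet {r n m b : ℕ} {a : Fin (n + 1) → ℕ} :
    (Fin.cons b a : Fin (n + 2) → ℕ) ∈ ESet r (n + 2) m ↔
      (b ≤ r - 1 ∧ b ≤ m) ∧ a ∈ ESet r (n + 1) (m - b) := by
  rw [mem_ESet, mem_ESet, Fin.sum_univ_succ, Fin.forall_fin_succ]
  simp only [Fin.cons_zero, Fin.cons_succ, Fin.val_zero, Fin.val_succ]
  constructor
  · rintro ⟨hsum, h0, hs⟩
    exact ⟨⟨h0 (by omega), by omega⟩, by omega, fun t ht => hs t (by omega)⟩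
  · rintro ⟨⟨h0, hbm⟩, hsum, hs⟩
    exact ⟨by omega, fun _ => h0, fun t ht => hs t (by omega)⟩

lemma sum_ESet_succ {M : Type*} [AddCommMonoid M] {r n m : ℕ} (hr : 1 ≤ r)
    (f : (Fin (n + 2) → ℕ) → M) :
    ∑ a ∈ ESet r (n + 2) m, f a =
      ∑ b ∈ range r with b ≤ m, ∑ a ∈ ESet r (n + 1) (m - b), f (Fin.cons b a) := by
  rw [sum_sigma']
  refine sum_bij' (fun a _ => ⟨a 0, Fin.tail a⟩) (fun x _ => Fin.cons x.1 x.2) ?_ ?_ ?_ ?_ ?_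
  · intro a ha
    rw [← Fin.cons_self_tail a, cons_mem_ESet] at ha
    simp only [mem_sigma, mem_filter, mem_range]
    exact ⟨⟨by omega, ha.1.2⟩, ha.2⟩
  · rintro ⟨b, a⟩ hx
    obtain ⟨⟨hb, hbm⟩, ha⟩ := by simpa only [mem_sigma, mem_filter, mem_range] using hx
    exact cons_mem_ESet.2 ⟨⟨Nat.le_sub_one_of_lt hb, hbm⟩, ha⟩
  · intro a _
    exact Fin.cons_self_tail a
  · rintro ⟨b, a⟩ _
    simp
  · intro a _
    rw [Fin.cons_self_tail]

lemma aget_cons_zero {n : ℕ} (b : ℕ) (a : Fin n → ℕ) :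
    aget (Fin.cons b a : Fin (n + 1) → ℕ) 0 = b := by
  simp [aget]

lemma aget_cons_succ {n : ℕ} (b : ℕ) (a : Fin n → ℕ) (t : ℕ) :
    aget (Fin.cons b a : Fin (n + 1) → ℕ) (t + 1) = aget a t := by
  by_cases ht : t < n
  · simp [aget, ht]
    rfl
  · simp [aget, ht]

/-- The coefficient of the tuple `a` in the expansion of `(k, 0, …, 0, ℓ)`, read on its first `m`
entries. -/
def weight (r : ℕ) (k : ℤ) (a : ℕ → ℕ) (m : ℕ) : K :=
  ∏ t ∈ range m, pairCoef r (k - ∑ u ∈ range t, (a u : ℤ)) (a t)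

lemma weight_succ (r : ℕ) (k : ℤ) (a : ℕ → ℕ) (m : ℕ) :
    weight r k a (m + 1) = pairCoef r k (a 0) * weight r (k - a 0) (fun t => a (t + 1)) m := by
  rw [weight, weight, prod_range_succ', mul_comm]
  simp only [sum_range_succ', sum_range_zero, sub_zero]
  congr 1
  exact prod_congr rfl fun t _ => by rw [sub_sub, add_comm]

lemma weight_cons {n : ℕ} (r : ℕ) (k : ℤ) (b : ℕ) (a : Fin n → ℕ) (m : ℕ) :
    weight r k (aget (Fin.cons b a : Fin (n + 1) → ℕ)) (m + 1) =
      pairCoef r k b * weight r (k - b) (aget a) m := by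
  rw [weight_succ, aget_cons_zero]
  simp only [aget_cons_succ]

lemma neg_one_pow_mul_prod_Acoef_eq_weight (r : ℕ) (k : ℤ) (a : ℕ → ℕ) (m : ℕ) :
    (-1) ^ ((∑ t ∈ range m, a t) + m * (r - 1)) *
        ∏ t ∈ range m, Acoef r (k - ∑ u ∈ range t, (a u : ℤ)) (r - a t) = weight r k a m := by
  simp only [weight, pairCoef, prod_mul_distrib, prod_pow_eq_pow_sum, sum_add_distrib, sum_const,
    card_range, smul_eq_mul]

/-- For `m = 0` this is `(k + ℓ)`, unlike `endTuple 1 k ℓ = (k)`. -/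
def endpoints (m k l : ℕ) : Fin (m + 1) → ℕ := Pi.single 0 k + Pi.single (Fin.last m) l

lemma endpoints_zero (k l : ℕ) : endpoints 0 k l = fun _ => k + l := by
  funext t
  simp [endpoints, Fin.fin_one_eq_zero t]

lemma endpoints_succ (m k l : ℕ) : endpoints (m + 1) k l = Fin.cons k (endpoints m 0 l) := by
  funext t
  refine Fin.cases ?_ (fun t => ?_) t
  · simp [endpoints, Fin.ext_iff]
  · simp [endpoints, Pi.single_apply, Fin.succ_ne_zero]

lemma cons_add_head_tail_endpoints (m j l : ℕ) :
    Fin.cons (j + endpoints m 0 l 0) (Fin.tail (endpoints m 0 l)) = endpoints m j l := by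
  funext t
  refine Fin.cases ?_ (fun t => ?_) t
  · simp [endpoints]
  · simp [endpoints, Fin.tail, Fin.succ_ne_zero]

lemma endTuple_eq_endpoints {m : ℕ} (hm : 1 ≤ m) (k l : ℕ) :
    endTuple (m + 1) k l = endpoints m k l := by
  funext t
  simp only [endTuple, endpoints, Pi.add_apply, Pi.single_apply, Fin.ext_iff, Fin.val_zero,
    Fin.val_last, Nat.add_sub_cancel]
  split_ifs <;> omega

theorem single_endpoints_smodEq {r : ℕ} (hr : 1 ≤ r) (m k l : ℕ) :
    𝐞[endpoints m k l] ≡ ∑ a ∈ ESet r (m + 1) (k + l), weight r k (aget a) m • 𝐞[a]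
      [SMOD relSpan r (m + 1)] := by
  induction m generalizing k with
  | zero => simp [endpoints_zero, ESet_one, weight]
  | succ m ih =>
    calc 𝐞[endpoints (m + 1) k l]
        ≡ ∑ b ∈ range r, pairCoef r k b •
          𝐞[(Fin.cons b (Fin.cons (k + endpoints m 0 l 0 - b) (Fin.tail (endpoints m 0 l))) :
            Fin (m + 2) → ℕ)] [SMOD relSpan r (m + 2)] := by
          conv_lhs => rw [endpoints_succ, ← Fin.cons_self_tail (endpoints m 0 l)]
          exact single_cons_cons_smodEq _ _ _
      _ = ∑ b ∈ range r with b ≤ k, pairCoef r k b •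
          𝐞[(Fin.cons b (endpoints m (k - b) l) : Fin (m + 2) → ℕ)] := by
          rw [sum_filter]
          refine sum_congr rfl fun b hb => ?_
          split_ifs with hbk
          · rw [← cons_add_head_tail_endpoints m (k - b) l, Nat.sub_add_comm hbk]
          · rw [pairCoef_eq_zero_of_lt (mem_range.1 hb).le (by omega), zero_smul]
      _ ≡ ∑ b ∈ range r with b ≤ k, pairCoef r k b • ∑ a ∈ ESet r (m + 1) (k + l - b),
          weight r (k - b) (aget a) m • 𝐞[(Fin.cons b a : Fin (m + 2) → ℕ)]
          [SMOD relSpan r (m + 2)] := by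
          refine SModEq.sum fun b hb => SModEq.smul ?_ _
          have hbk := (mem_filter.1 hb).2
          have h := (ih (k - b)).mapDomain_cons b
          simp only [Finsupp.mapDomain_single, Finsupp.mapDomain_finsetSum,
            Finsupp.mapDomain_smul] at h
          rwa [Nat.cast_sub hbk, ← Nat.sub_add_comm hbk] at h
      _ = ∑ a ∈ ESet r (m + 2) (k + l), weight r k (aget a) (m + 1) • 𝐞[a] := by
          rw [sum_ESet_succ hr]
          simp_rw [weight_cons, mul_smul, ← smul_sum]
          refine sum_subset (fun b hb => ?_) fun b hb hbk => ?_
          · simp only [mem_filter, mem_range] at hb ⊢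
            omega
          · simp only [mem_filter, mem_range, not_and, not_le] at hb hbk
            rw [pairCoef_eq_zero_of_lt hb.1.le (hbk hb.1), zero_smul]

/-- for `n ≥ 2` and `k, ℓ ∈ ℕ`,
`(k,0,…,0,ℓ) = Σ_{a ∈ 𝓔_n(k+ℓ)} (−1)^{a_1+⋯+a_{n−1}+(n−1)(r−1)}
  (∏_{i=1}^{n−1} A(k−x_i, r−a_i)) · a` holds in `V_n`, where `x_i = a_1+⋯+a_{i−1}`. -/
theorem stmt10 (r n : ℕ) (hr : 2 ≤ r) (hn : 2 ≤ n) (k l : ℕ) :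
    Finsupp.single (endTuple n k l) (1 : K)
      - ∑ a ∈ ESet r n (k + l),
          ((-1 : K) ^ ((∑ t ∈ Finset.range (n - 1), aget a t) + (n - 1) * (r - 1)) *
            ∏ t ∈ Finset.range (n - 1),
              Acoef r ((k : ℤ) - (∑ u ∈ Finset.range t, (aget a u : ℤ))) (r - aget a t)) •
          Finsupp.single a (1 : K)
      ∈ Submodule.span K (relSet r n) := by
  obtain ⟨m, rfl⟩ : ∃ m, n = m + 1 := ⟨n - 1, by omega⟩
  rw [← SModEq.sub_mem, endTuple_eq_endpoints (by omega)]
  simp only [Nat.add_sub_cancel, neg_one_pow_mul_prod_Acoef_eq_weight]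
  exact single_endpoints_smodEq (by omega) m k l
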